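/- Let J be a diagram, (M_w, M_z) the pair of isometries defined by J on H_J, and μ ∈ ℂ with 0 < |μ| < 1. Then ran(μ − M_w) is closed, and its orthogonal complement, which equals ker(conj(μ) − M_w*), is the closed span of the vectors e_j^μ := Σ_{i ≥ M_j} conj(μ)^{i−M_j} e_{(i,j)} taken over all j ∈ ℤ with M_j ∈ ℤ (rows with M_j = −∞ contribute nothing; these vectors are pairwise orthogonal, each of norm (1−|μ|²)^{−1/2}). -/

import Mathlib

open scoped ENNReal ComplexConjugate InnerProductSpace
open Filter

noncomputable section

namespace TaylorDiagram

/-- A diagram: a subset of ℤ² closed under adding ℕ². -/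
def IsDiagram (J : Set (ℤ × ℤ)) : Prop :=
  ∀ p ∈ J, ∀ k l : ℕ, (p.1 + (k : ℤ), p.2 + (l : ℤ)) ∈ J

/-- Translate of a set of ℤ² by a vector. -/
def tr (v : ℤ × ℤ) (J : Set (ℤ × ℤ)) : Set (ℤ × ℤ) :=
  (fun p => (v.1 + p.1, v.2 + p.2)) '' J

def Equivalent (J₁ J₂ : Set (ℤ × ℤ)) : Prop := ∃ v : ℤ × ℤ, J₁ = tr v J₂

/-- Simple diagrams: translation equivalent to ℤ², ℤ₊², ℤ₊×ℤ or ℤ×ℤ₊. -/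
def Simple (J : Set (ℤ × ℤ)) : Prop :=
  Equivalent J Set.univ ∨ Equivalent J {p | 0 < p.1 ∧ 0 < p.2} ∨
    Equivalent J {p | 0 < p.1} ∨ Equivalent J {p | 0 < p.2}

/-- The Hilbert space ℓ²(J). -/
abbrev HJ (J : Set (ℤ × ℤ)) : Type := lp (fun _ : J => ℂ) 2

/-- Canonical orthonormal basis vectors of ℓ²(J). -/
def e (J : Set (ℤ × ℤ)) (p : J) : HJ J := lp.single 2 p 1

/-- `Mw` is the horizontal shift on ℓ²(J). -/
def IsShiftW (J : Set (ℤ × ℤ)) (Mw : HJ J →L[ℂ] HJ J) : Prop :=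
  ∀ (p : ℤ × ℤ) (hp : p ∈ J) (hp' : (p.1 + 1, p.2) ∈ J),
    Mw (e J ⟨p, hp⟩) = e J ⟨(p.1 + 1, p.2), hp'⟩

/-- `Mz` is the vertical shift on ℓ²(J). -/
def IsShiftZ (J : Set (ℤ × ℤ)) (Mz : HJ J →L[ℂ] HJ J) : Prop :=
  ∀ (p : ℤ × ℤ) (hp : p ∈ J) (hp' : (p.1, p.2 + 1) ∈ J),
    Mz (e J ⟨p, hp⟩) = e J ⟨(p.1, p.2 + 1), hp'⟩

section Conditions

variable {H : Type*} [NormedAddCommGroup H] [InnerProductSpace ℂ H]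

/-- Condition (T1) of exactness of the Koszul complex. -/
def CondT1 (A B : H →L[ℂ] H) : Prop :=
  LinearMap.ker (A : H →ₗ[ℂ] H) ⊓ LinearMap.ker (B : H →ₗ[ℂ] H) = ⊥

/-- Condition (T2) of exactness of the Koszul complex. -/
def CondT2 (A B : H →L[ℂ] H) : Prop :=
  ∀ h₁ h₂ : H, A h₂ = B h₁ → ∃ h : H, h₁ = A h ∧ h₂ = B h

/-- Condition (T3) of exactness of the Koszul complex. -/
def CondT3 (A B : H →L[ℂ] H) : Prop :=
  LinearMap.range (A : H →ₗ[ℂ] H) ⊔ LinearMap.range (B : H →ₗ[ℂ] H) = ⊤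

/-- Exactness of the (short) Koszul complex of a pair. -/
def KoszulExact (A B : H →L[ℂ] H) : Prop :=
  CondT1 A B ∧ CondT2 A B ∧ CondT3 A B

/-- The Taylor spectrum of a commuting pair. -/
def taylorSpectrum (A B : H →L[ℂ] H) : Set (ℂ × ℂ) :=
  {p | ¬ KoszulExact (p.1 • (1 : H →L[ℂ] H) - A) (p.2 • (1 : H →L[ℂ] H) - B)}

/-- Γ₂: the set of points where (T2) fails. -/
def Gamma2 (A B : H →L[ℂ] H) : Set (ℂ × ℂ) :=
  {p | ¬ CondT2 (p.1 • (1 : H →L[ℂ] H) - A) (p.2 • (1 : H →L[ℂ] H) - B)}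

/-- Γ₃: the set of points where (T3) fails. -/
def Gamma3 (A B : H →L[ℂ] H) : Set (ℂ × ℂ) :=
  {p | ¬ CondT3 (p.1 • (1 : H →L[ℂ] H) - A) (p.2 • (1 : H →L[ℂ] H) - B)}

end Conditions

/-- The vectors `e_j^μ = Σ_{i ≥ M_j} conj(μ)^{i−M_j} e_{(i,j)}`, one for each row `j` of
the diagram whose row is a genuine half-line `[M_j, ∞)` with `M_j ∈ ℤ`, written out in
coordinates. -/
def kerVecs (J : Set (ℤ × ℤ)) (μ : ℂ) : Set (HJ J) :=
  {v : HJ J | ∃ j mj : ℤ, (∀ i : ℤ, ((i, j) ∈ J ↔ mj ≤ i)) ∧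
    ∀ p : J, v p =
      if (p : ℤ × ℤ).2 = j ∧ mj ≤ (p : ℤ × ℤ).1 then
        (starRingEnd ℂ μ) ^ ((p : ℤ × ℤ).1 - mj).toNat else 0}

/-! Since `(M_w* x)(i, j) = x(i + 1, j)`, one has `M_w* e_(i+1,j) = e_(i,j)` and hence
`M_w* M_w = 1`: `M_w` is an isometry, so `‖(μ - M_w) x‖ ≥ (1 - |μ|) ‖x‖` and the range is
closed, with orthogonal complement the kernel of the adjoint `conj μ - M_w*`. A kernel vector
is geometric with ratio `conj μ` along every row. On a full row square summability forces it
to vanish; on a row starting at `M_j` it is `x(M_j, j) e_j^μ`, and `⟪e_j^μ, x⟫` is a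
nonzero multiple of `x(M_j, j)`. So a kernel vector orthogonal to every `e_j^μ` is zero. -/

namespace IsDiagram

variable {J : Set (ℤ × ℤ)} (hJ : IsDiagram J)
include hJ

lemma mem_of_le {i i' j : ℤ} (h : (i, j) ∈ J) (hle : i ≤ i') : (i', j) ∈ J := by
  simpa [Int.toNat_of_nonneg (sub_nonneg.mpr hle)] using hJ (i, j) h (i' - i).toNat 0

lemma row_eq_univ_or_Ici {i j : ℤ} (h : (i, j) ∈ J) :
    (∀ i', (i', j) ∈ J) ∨ ∃ m : ℤ, ∀ i', (i', j) ∈ J ↔ m ≤ i' := by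
  by_cases hfull : ∀ i', (i', j) ∈ J
  · exact Or.inl hfull
  push Not at hfull
  obtain ⟨i₀, hi₀⟩ := hfull
  have hbdd : ∀ i', (i', j) ∈ J → i₀ ≤ i' := fun i' hi' => by
    by_contra hlt
    exact hi₀ (hJ.mem_of_le hi' (by omega))
  obtain ⟨m, hm, hmin⟩ := Int.exists_least_of_bdd ⟨i₀, hbdd⟩ ⟨i, h⟩
  exact Or.inr ⟨m, fun i' => ⟨hmin i', hJ.mem_of_le hm⟩⟩

end IsDiagram

section Shift

variable {J : Set (ℤ × ℤ)} (hJ : IsDiagram J)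

def succW (p : J) : J :=
  ⟨((p : ℤ × ℤ).1 + 1, (p : ℤ × ℤ).2), hJ.mem_of_le p.2 (Int.le_add_one le_rfl)⟩

lemma coe_succW_iterate (k : ℕ) (p : J) :
    ((succW hJ)^[k] p : ℤ × ℤ) = ((p : ℤ × ℤ).1 + k, (p : ℤ × ℤ).2) := by
  induction k generalizing p with
  | zero => simp
  | succ k ih =>
    rw [Function.iterate_succ_apply, ih]
    simp only [succW, Prod.mk.injEq, and_true]
    push_cast
    ring

lemma succW_injective : Function.Injective (succW hJ) := by
  intro p q h
  have h' := congrArg Subtype.val h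
  simp only [succW, Prod.mk.injEq, add_left_inj] at h'
  exact Subtype.ext (Prod.ext h'.1 h'.2)

lemma e_apply (p q : J) : e J p q = if q = p then 1 else 0 := by
  classical
  simp [e, lp.single_apply, Pi.single_apply]

lemma inner_e_left (p : J) (x : HJ J) : ⟪e J p, x⟫_ℂ = x p := by
  classical
  simp [e, lp.inner_single_left]

variable {Mw : HJ J →L[ℂ] HJ J}

lemma IsShiftW.apply_e (hMw : IsShiftW J Mw) (p : J) : Mw (e J p) = e J (succW hJ p) :=
  hMw (p : ℤ × ℤ) p.2 _

lemma IsShiftW.adjoint_apply (hMw : IsShiftW J Mw) (x : HJ J) (p : J) :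
    (ContinuousLinearMap.adjoint Mw x) p = x (succW hJ p) := by
  rw [← inner_e_left, ContinuousLinearMap.adjoint_inner_right, hMw.apply_e hJ, inner_e_left]

lemma IsShiftW.adjoint_e_succW (hMw : IsShiftW J Mw) (p : J) :
    ContinuousLinearMap.adjoint Mw (e J (succW hJ p)) = e J p := by
  ext q
  simp only [hMw.adjoint_apply hJ, e_apply, (succW_injective hJ).eq_iff]

lemma IsShiftW.apply_succW (hMw : IsShiftW J Mw) (x : HJ J) (p : J) :
    Mw x (succW hJ p) = x p := by
  rw [← inner_e_left, ← ContinuousLinearMap.adjoint_inner_left, hMw.adjoint_e_succW hJ,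
    inner_e_left]

include hJ in
lemma IsShiftW.norm_map (hMw : IsShiftW J Mw) (x : HJ J) : ‖Mw x‖ = ‖x‖ := by
  refine (ContinuousLinearMap.norm_map_iff_adjoint_comp_self Mw).mpr ?_ x
  ext y p
  rw [ContinuousLinearMap.comp_apply, hMw.adjoint_apply hJ, hMw.apply_succW hJ]
  rfl

end Shift

lemma isClosed_range_smul_one_sub_of_norm_map {𝕜 E : Type*} [NontriviallyNormedField 𝕜]
    [NormedAddCommGroup E] [NormedSpace 𝕜 E] [CompleteSpace E] {T : E →L[𝕜] E} {μ : 𝕜}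
    (hT : ∀ x, ‖T x‖ = ‖x‖) (hμ : ‖μ‖ < 1) :
    IsClosed (Set.range (μ • (1 : E →L[𝕜] E) - T)) := by
  have hpos : 0 < 1 - ‖μ‖ := sub_pos.mpr hμ
  have hbelow : ∀ x, ‖x‖ ≤ (1 - ‖μ‖)⁻¹ * ‖(μ • (1 : E →L[𝕜] E) - T) x‖ := fun x => by
    rw [le_inv_mul_iff₀ hpos]
    calc (1 - ‖μ‖) * ‖x‖ = ‖T x‖ - ‖μ • x‖ := by rw [hT, norm_smul]; ring
      _ ≤ ‖μ • x - T x‖ := by rw [norm_sub_rev]; exact norm_sub_norm_le _ _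
      _ = ‖(μ • (1 : E →L[𝕜] E) - T) x‖ := rfl
  exact (ContinuousLinearMap.antilipschitz_of_bound _ (K := ⟨_, (inv_pos.mpr hpos).le⟩)
    hbelow).isClosed_range (ContinuousLinearMap.uniformContinuous _)

lemma adjoint_smul_one_sub {E : Type*} [NormedAddCommGroup E] [InnerProductSpace ℂ E]
    [CompleteSpace E] (T : E →L[ℂ] E) (μ : ℂ) :
    ContinuousLinearMap.adjoint (μ • (1 : E →L[ℂ] E) - T) =
      conj μ • (1 : E →L[ℂ] E) - ContinuousLinearMap.adjoint T := by
  simp [← ContinuousLinearMap.star_eq_adjoint]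

section Kernel

variable {J : Set (ℤ × ℤ)} (hJ : IsDiagram J) {Mw : HJ J →L[ℂ] HJ J}

lemma IsShiftW.mem_ker_smul_one_sub_adjoint_iff (hMw : IsShiftW J Mw) (c : ℂ) (x : HJ J) :
    x ∈ LinearMap.ker ((c • (1 : HJ J →L[ℂ] HJ J) - ContinuousLinearMap.adjoint Mw :
      HJ J →L[ℂ] HJ J) : HJ J →ₗ[ℂ] HJ J) ↔ ∀ p : J, x (succW hJ p) = c * x p := by
  rw [LinearMap.mem_ker, ContinuousLinearMap.coe_coe, sub_apply,
    sub_eq_zero, lp.ext_iff, funext_iff]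
  refine forall_congr' fun p => ?_
  rw [smul_apply, one_apply_eq_self, lp.coeFn_smul,
    hMw.adjoint_apply hJ, eq_comm]
  rfl

variable {hJ} {x : HJ J} {c : ℂ}

lemma apply_succW_iterate (hx : ∀ p : J, x (succW hJ p) = c * x p) (k : ℕ) (p : J) :
    x ((succW hJ)^[k] p) = c ^ k * x p := by
  induction k with
  | zero => simp
  | succ k ih => rw [Function.iterate_succ_apply', hx, ih, pow_succ]; ring

lemma eq_zero_of_row_eq_univ (hc : ‖c‖ < 1) (hx : ∀ p : J, x (succW hJ p) = c * x p) (p : J)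
    (hrow : ∀ i, (i, (p : ℤ × ℤ).2) ∈ J) : x p = 0 := by
  have hbound : ∀ n : ℕ, ‖x p‖ ≤ ‖c‖ ^ n * ‖x‖ := fun n => by
    let q : J := ⟨((p : ℤ × ℤ).1 - n, (p : ℤ × ℤ).2), hrow _⟩
    have hqp : (succW hJ)^[n] q = p := Subtype.ext (by rw [coe_succW_iterate]; simp [q])
    rw [← hqp, apply_succW_iterate hx, norm_mul, norm_pow]
    exact mul_le_mul_of_nonneg_left (lp.norm_apply_le_norm two_ne_zero x q) (by positivity)
  have hlim : Tendsto (fun n : ℕ => ‖c‖ ^ n * ‖x‖) atTop (nhds 0) := by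
    simpa using (tendsto_pow_atTop_nhds_zero_of_lt_one (norm_nonneg c) hc).mul_const ‖x‖
  exact norm_le_zero_iff.mp (ge_of_tendsto' hlim hbound)

end Kernel

def rowCoeff (μ : ℂ) (j m : ℤ) (p : ℤ × ℤ) : ℂ :=
  if p.2 = j ∧ m ≤ p.1 then conj μ ^ (p.1 - m).toNat else 0

lemma mem_kerVecs_iff {J : Set (ℤ × ℤ)} {μ : ℂ} {v : HJ J} :
    v ∈ kerVecs J μ ↔
      ∃ j m : ℤ, (∀ i : ℤ, ((i, j) ∈ J ↔ m ≤ i)) ∧ ∀ p : J, v p = rowCoeff μ j m p :=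
  Iff.rfl

lemma row_min_unique {J : Set (ℤ × ℤ)} {j m m' : ℤ} (hrow : ∀ i : ℤ, ((i, j) ∈ J ↔ m ≤ i))
    (hrow' : ∀ i : ℤ, ((i, j) ∈ J ↔ m' ≤ i)) : m = m' :=
  le_antisymm ((hrow m').mp ((hrow' m').mpr le_rfl)) ((hrow' m).mp ((hrow m).mpr le_rfl))

section Row

variable {J : Set (ℤ × ℤ)} {μ : ℂ} {j m : ℤ} (hrow : ∀ i : ℤ, ((i, j) ∈ J ↔ m ≤ i))

def rowPt (k : ℕ) : J := ⟨(m + k, j), (hrow _).mpr (by omega)⟩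

lemma rowPt_injective : Function.Injective (rowPt hrow) := fun k l h => by
  simpa [rowPt] using congrArg (fun p : J => (p : ℤ × ℤ).1) h

lemma rowCoeff_rowPt (k : ℕ) : rowCoeff μ j m (rowPt hrow k) = conj μ ^ k := by
  simp [rowCoeff, rowPt]

lemma rowPt_toNat {p : J} (hp : (p : ℤ × ℤ).2 = j) :
    rowPt hrow ((p : ℤ × ℤ).1 - m).toNat = p := by
  have hm : m ≤ (p : ℤ × ℤ).1 := (hrow _).mp (hp ▸ p.2)
  exact Subtype.ext (Prod.ext (by simp [rowPt]; omega) hp.symm)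

lemma support_subset_range_rowPt {α : Type*} [Zero α] {f : J → α}
    (hf : ∀ p : J, (p : ℤ × ℤ).2 ≠ j → f p = 0) :
    Function.support f ⊆ Set.range (rowPt hrow) := fun p hp =>
  ⟨_, rowPt_toNat hrow (by_contra fun hpj => hp (hf p hpj))⟩

section Support

variable {α : Type*} [AddCommMonoid α] [TopologicalSpace α] {f : J → α}
  (hf : ∀ p : J, (p : ℤ × ℤ).2 ≠ j → f p = 0)
include hf

lemma summable_comp_rowPt_iff : Summable (f ∘ rowPt hrow) ↔ Summable f :=
  (rowPt_injective hrow).summable_iff fun _ hp =>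
    Function.notMem_support.mp fun h => hp (support_subset_range_rowPt hrow hf h)

lemma tsum_eq_tsum_rowPt : ∑' p, f p = ∑' k, f (rowPt hrow k) :=
  ((rowPt_injective hrow).tsum_eq (support_subset_range_rowPt hrow hf)).symm

end Support

lemma rowCoeff_of_ne {p : ℤ × ℤ} (hp : p.2 ≠ j) : rowCoeff μ j m p = 0 :=
  if_neg fun h => hp h.1

include hrow in
lemma memℓp_rowCoeff (hμ : ‖μ‖ < 1) : Memℓp (fun p : J => rowCoeff μ j m p) 2 := by
  refine memℓp_gen ((summable_comp_rowPt_iff hrow fun p hp => ?_).mp ?_)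
  · simp [rowCoeff_of_ne hp]
  · have hsq : ‖μ‖ ^ 2 < 1 := by nlinarith [norm_nonneg μ]
    refine (summable_geometric_of_lt_one (by positivity) hsq).congr fun k => ?_
    simp [rowCoeff_rowPt, ← pow_mul, mul_comm]

def rowVec (hμ : ‖μ‖ < 1) : HJ J := ⟨_, memℓp_rowCoeff hrow hμ⟩

lemma rowVec_mem_kerVecs (hμ : ‖μ‖ < 1) : rowVec hrow hμ ∈ kerVecs J μ :=
  ⟨j, m, hrow, fun _ => rfl⟩

lemma inner_eq_of_rowCoeff (hμ : ‖μ‖ < 1) {v z : HJ J} (hv : ∀ p : J, v p = rowCoeff μ j m p)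
    (hz : ∀ k : ℕ, z (rowPt hrow k) = conj μ ^ k * z (rowPt hrow 0)) :
    ⟪v, z⟫_ℂ = (1 - (‖μ‖ : ℂ) ^ 2)⁻¹ * z (rowPt hrow 0) := by
  have hsq : ‖(‖μ‖ : ℂ) ^ 2‖ < 1 := by simp; nlinarith [norm_nonneg μ]
  rw [lp.inner_eq_tsum, tsum_eq_tsum_rowPt hrow fun p hp => by simp [hv, rowCoeff_of_ne hp],
    ← tsum_geometric_of_norm_lt_one hsq, ← tsum_mul_right]
  refine tsum_congr fun k => ?_
  rw [hv, rowCoeff_rowPt, hz, RCLike.inner_apply, map_pow, Complex.conj_conj,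
    ← Complex.mul_conj', mul_pow]
  ring

include hrow in
lemma norm_eq_of_rowCoeff (hμ : ‖μ‖ < 1) {v : HJ J} (hv : ∀ p : J, v p = rowCoeff μ j m p) :
    ‖v‖ = (Real.sqrt (1 - ‖μ‖ ^ 2))⁻¹ := by
  have h := inner_eq_of_rowCoeff hrow hμ hv fun k => by
    rw [hv, hv, rowCoeff_rowPt, rowCoeff_rowPt, pow_zero, mul_one]
  rw [inner_self_eq_norm_sq_to_K, hv, rowCoeff_rowPt, pow_zero, mul_one] at h
  have h' : ‖v‖ ^ 2 = (1 - ‖μ‖ ^ 2)⁻¹ := by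
    rw [← Complex.ofReal_inj]
    push_cast
    exact h
  rw [← Real.sqrt_inv, ← h', Real.sqrt_sq (norm_nonneg v)]

end Row

section KerVecs

variable {J : Set (ℤ × ℤ)} {μ : ℂ}

lemma inner_eq_zero_of_mem_kerVecs {v w : HJ J} (hv : v ∈ kerVecs J μ) (hw : w ∈ kerVecs J μ)
    (hvw : v ≠ w) : ⟪v, w⟫_ℂ = 0 := by
  obtain ⟨j, m, hrow, hv⟩ := mem_kerVecs_iff.mp hv
  obtain ⟨j', m', hrow', hw⟩ := mem_kerVecs_iff.mp hw
  by_cases hjj : j = j'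
  · subst hjj
    obtain rfl := row_min_unique hrow hrow'
    exact absurd (lp.ext (funext fun p => (hv p).trans (hw p).symm)) hvw
  · have hterm : ∀ p : J, ⟪v p, w p⟫_ℂ = 0 := fun p => by
      by_cases hp : (p : ℤ × ℤ).2 = j
      · rw [hw, rowCoeff_of_ne (hp ▸ hjj), inner_zero_right]
      · rw [hv, rowCoeff_of_ne hp, inner_zero_left]
    rw [lp.inner_eq_tsum, tsum_congr hterm, tsum_zero]

variable (hJ : IsDiagram J) {Mw : HJ J →L[ℂ] HJ J}

lemma rowCoeff_succW {j m : ℤ} (hrow : ∀ i : ℤ, ((i, j) ∈ J ↔ m ≤ i)) (p : J) :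
    rowCoeff μ j m (succW hJ p) = conj μ * rowCoeff μ j m p := by
  by_cases hp : (p : ℤ × ℤ).2 = j
  · have hm : m ≤ (p : ℤ × ℤ).1 := (hrow _).mp (hp ▸ p.2)
    simp only [rowCoeff, succW, hp, true_and, if_pos hm,
      if_pos (hm.trans (Int.le_add_one le_rfl))]
    rw [show ((p : ℤ × ℤ).1 + 1 - m).toNat = ((p : ℤ × ℤ).1 - m).toNat + 1 by omega, pow_succ']
  · rw [rowCoeff_of_ne hp, rowCoeff_of_ne (by exact hp), mul_zero]

include hJ in
lemma IsShiftW.kerVecs_subset_ker (hMw : IsShiftW J Mw) :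
    kerVecs J μ ⊆ LinearMap.ker ((conj μ • (1 : HJ J →L[ℂ] HJ J) -
      ContinuousLinearMap.adjoint Mw : HJ J →L[ℂ] HJ J) : HJ J →ₗ[ℂ] HJ J) := by
  intro v hv
  obtain ⟨j, m, hrow, hv⟩ := mem_kerVecs_iff.mp hv
  refine (hMw.mem_ker_smul_one_sub_adjoint_iff hJ _ v).mpr fun p => ?_
  rw [hv, hv, rowCoeff_succW hJ hrow]

lemma eq_zero_of_forall_inner_kerVecs_eq_zero (hμ : ‖μ‖ < 1) {z : HJ J}
    (hz : ∀ p : J, z (succW hJ p) = conj μ * z p) (horth : ∀ v ∈ kerVecs J μ, ⟪v, z⟫_ℂ = 0) :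
    z = 0 := by
  ext p
  rcases hJ.row_eq_univ_or_Ici (i := (p : ℤ × ℤ).1) (j := (p : ℤ × ℤ).2) p.2 with
    hfull | ⟨m, hrow⟩
  · exact eq_zero_of_row_eq_univ (by simpa using hμ) hz p hfull
  have hgeom : ∀ k : ℕ, z (rowPt hrow k) = conj μ ^ k * z (rowPt hrow 0) := fun k => by
    have hk : rowPt hrow k = (succW hJ)^[k] (rowPt hrow 0) :=
      Subtype.ext (by simp [rowPt, coe_succW_iterate])
    rw [hk, apply_succW_iterate hz]
  have hne : (1 - (‖μ‖ : ℂ) ^ 2) ≠ 0 := by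
    have : (1 - ‖μ‖ ^ 2 : ℝ) ≠ 0 := by nlinarith [norm_nonneg μ]
    exact_mod_cast this
  have h0 : z (rowPt hrow 0) = 0 := by
    have h := horth _ (rowVec_mem_kerVecs hrow hμ)
    rw [inner_eq_of_rowCoeff hrow hμ (fun _ => rfl) hgeom] at h
    exact (mul_eq_zero.mp h).resolve_left (inv_ne_zero hne)
  rw [← rowPt_toNat hrow rfl, hgeom, h0, mul_zero]
  rfl

include hJ in
lemma IsShiftW.ker_eq_closure_span_kerVecs (hMw : IsShiftW J Mw) (hμ : ‖μ‖ < 1) :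
    LinearMap.ker ((conj μ • (1 : HJ J →L[ℂ] HJ J) -
      ContinuousLinearMap.adjoint Mw : HJ J →L[ℂ] HJ J) : HJ J →ₗ[ℂ] HJ J) =
      (Submodule.span ℂ (kerVecs J μ)).topologicalClosure := by
  set K := (Submodule.span ℂ (kerVecs J μ)).topologicalClosure
  have hK : K ≤ LinearMap.ker ((conj μ • (1 : HJ J →L[ℂ] HJ J) -
      ContinuousLinearMap.adjoint Mw : HJ J →L[ℂ] HJ J) : HJ J →ₗ[ℂ] HJ J) :=
    Submodule.topologicalClosure_minimal _ (Submodule.span_le.mpr (hMw.kerVecs_subset_ker hJ))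
      (ContinuousLinearMap.isClosed_ker _)
  have hbot : Kᗮ ⊓ LinearMap.ker ((conj μ • (1 : HJ J →L[ℂ] HJ J) -
      ContinuousLinearMap.adjoint Mw : HJ J →L[ℂ] HJ J) : HJ J →ₗ[ℂ] HJ J) = ⊥ := by
    refine eq_bot_iff.mpr fun z ⟨hzK, hzker⟩ => ?_
    exact eq_zero_of_forall_inner_kerVecs_eq_zero hJ hμ
      ((hMw.mem_ker_smul_one_sub_adjoint_iff hJ _ z).mp hzker) fun v hv =>
        Submodule.inner_right_of_mem_orthogonal
          (Submodule.le_topologicalClosure _ (Submodule.subset_span hv)) hzK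
  rw [← Submodule.sup_orthogonal_inf_of_hasOrthogonalProjection hK, hbot, sup_bot_eq]

end KerVecs

theorem stmt13_general (J : Set (ℤ × ℤ)) (hJ : IsDiagram J)
    (Mw : HJ J →L[ℂ] HJ J) (hMw : IsShiftW J Mw)
    (μ : ℂ) (hμ1 : ‖μ‖ < 1) :
    IsClosed ((LinearMap.range (((μ • (1 : HJ J →L[ℂ] HJ J) - Mw : HJ J →L[ℂ] HJ J) : HJ J →ₗ[ℂ] HJ J)) :
        Submodule ℂ (HJ J)) : Set (HJ J)) ∧
    (LinearMap.range (((μ • (1 : HJ J →L[ℂ] HJ J) - Mw : HJ J →L[ℂ] HJ J) : HJ J →ₗ[ℂ] HJ J)))ᗮ =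
      LinearMap.ker ((((starRingEnd ℂ μ) • (1 : HJ J →L[ℂ] HJ J) -
        ContinuousLinearMap.adjoint Mw : HJ J →L[ℂ] HJ J) : HJ J →ₗ[ℂ] HJ J)) ∧
    LinearMap.ker ((((starRingEnd ℂ μ) • (1 : HJ J →L[ℂ] HJ J) -
        ContinuousLinearMap.adjoint Mw : HJ J →L[ℂ] HJ J) : HJ J →ₗ[ℂ] HJ J)) =
      (Submodule.span ℂ (kerVecs J μ)).topologicalClosure ∧
    (∀ v ∈ kerVecs J μ, ‖v‖ = (Real.sqrt (1 - ‖μ‖ ^ 2))⁻¹) ∧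
    (∀ v ∈ kerVecs J μ, ∀ w ∈ kerVecs J μ, v ≠ w → ⟪v, w⟫_ℂ = 0) := by
  refine ⟨?_, ?_, hMw.ker_eq_closure_span_kerVecs hJ hμ1, fun v hv => ?_,
    fun v hv w hw => inner_eq_zero_of_mem_kerVecs hv hw⟩
  · rw [LinearMap.coe_range, ContinuousLinearMap.coe_coe]
    exact isClosed_range_smul_one_sub_of_norm_map (hMw.norm_map hJ) hμ1
  · rw [ContinuousLinearMap.orthogonal_range, adjoint_smul_one_sub]
  · obtain ⟨j, m, hrow, hv⟩ := mem_kerVecs_iff.mp hv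
    exact norm_eq_of_rowCoeff hrow hμ1 hv

/-- For a diagram `J` and `0 < |μ| < 1`, the range of `μ − M_w` is closed and its
orthogonal complement, which is `ker(μ̄ − M_w*)`, is the closed span of the vectors
`e_j^μ` (rows with `M_j = −∞` contribute nothing); these vectors are pairwise orthogonal,
each of norm `(1 − |μ|²)^{−1/2}`. -/
theorem stmt13 (J : Set (ℤ × ℤ)) (hJ : IsDiagram J)
    (Mw : HJ J →L[ℂ] HJ J) (hMw : IsShiftW J Mw)
    (μ : ℂ) (hμ0 : 0 < ‖μ‖) (hμ1 : ‖μ‖ < 1) :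
    IsClosed ((LinearMap.range (((μ • (1 : HJ J →L[ℂ] HJ J) - Mw : HJ J →L[ℂ] HJ J) : HJ J →ₗ[ℂ] HJ J)) :
        Submodule ℂ (HJ J)) : Set (HJ J)) ∧
    (LinearMap.range (((μ • (1 : HJ J →L[ℂ] HJ J) - Mw : HJ J →L[ℂ] HJ J) : HJ J →ₗ[ℂ] HJ J)))ᗮ =
      LinearMap.ker ((((starRingEnd ℂ μ) • (1 : HJ J →L[ℂ] HJ J) -
        ContinuousLinearMap.adjoint Mw : HJ J →L[ℂ] HJ J) : HJ J →ₗ[ℂ] HJ J)) ∧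
    LinearMap.ker ((((starRingEnd ℂ μ) • (1 : HJ J →L[ℂ] HJ J) -
        ContinuousLinearMap.adjoint Mw : HJ J →L[ℂ] HJ J) : HJ J →ₗ[ℂ] HJ J)) =
      (Submodule.span ℂ (kerVecs J μ)).topologicalClosure ∧
    (∀ v ∈ kerVecs J μ, ‖v‖ = (Real.sqrt (1 - ‖μ‖ ^ 2))⁻¹) ∧
    (∀ v ∈ kerVecs J μ, ∀ w ∈ kerVecs J μ, v ≠ w → ⟪v, w⟫_ℂ = 0) :=
  stmt13_general J hJ Mw hMw μ hμ1

end TaylorDiagram
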